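/- arXiv:math/0406269 — 7 statements merged into one kernel-verified Lean document; each statement's English description precedes it below -/
import Mathlib

section
/- (Lemma 1) For any submodule A of a Hermitian Λ-module H, the double annihilator satisfies Ann(Ann(A)) = Ā, the closure of A in H. -/
open scoped TensorProduct

/-- A sesquilinear form on `H`: `Λ`-linear in the first variable,
conjugate-linear in the second. -/
abbrev SesqForm (Λ : Type*) [CommRing Λ] [StarRing Λ]
    (H : Type*) [AddCommGroup H] [Module Λ H] :=
  H →ₗ[Λ] H →ₛₗ[starRingEnd Λ] Λ

namespace SesqForm

variable {Λ : Type*} [CommRing Λ] [StarRing Λ]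
variable {H : Type*} [AddCommGroup H] [Module Λ H]

/-- The skew-hermitian condition `ω(x,y) = -conj ω(y,x)`. -/
def IsSkew (ω : SesqForm Λ H) : Prop := ∀ x y : H, ω x y = - star (ω y x)

/-- Non-degeneracy of a sesquilinear form. -/
def Nondeg (ω : SesqForm Λ H) : Prop := ∀ x : H, (∀ y : H, ω x y = 0) → x = 0

/-- The annihilator of a submodule with respect to a sesquilinear form. -/
def ann (ω : SesqForm Λ H) (A : Submodule Λ H) : Submodule Λ H where
  carrier := {x | ∀ a ∈ A, ω x a = 0}
  zero_mem' := by intro a _; simp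
  add_mem' := by
    intro x y hx hy a ha
    simp [hx a ha, hy a ha]
  smul_mem' := by
    intro c x hx a ha
    simp [hx a ha]

end SesqForm

/-- The closure (saturation) of a submodule: elements a nonzero multiple of
which lies in the submodule. -/
def Submodule.clos {Λ : Type*} [CommRing Λ] [IsDomain Λ] {H : Type*} [AddCommGroup H] [Module Λ H]
    (A : Submodule Λ H) : Submodule Λ H where
  carrier := {x | ∃ c : Λ, c ≠ 0 ∧ c • x ∈ A}
  zero_mem' := ⟨1, one_ne_zero, by simp⟩
  add_mem' := by
    rintro x y ⟨c, hc, hx⟩ ⟨d, hd, hy⟩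
    refine ⟨c * d, mul_ne_zero hc hd, ?_⟩
    rw [smul_add]
    refine Submodule.add_mem _ ?_ ?_
    · rw [mul_comm, mul_smul]; exact Submodule.smul_mem _ d hx
    · rw [mul_smul]; exact Submodule.smul_mem _ c hy
  smul_mem' := by
    rintro c x ⟨d, hd, hx⟩
    exact ⟨d, hd, by rw [smul_comm]; exact Submodule.smul_mem _ c hx⟩

/-- A submodule is Lagrangian when its closure equals its annihilator. -/
def SesqForm.IsLagrangian {Λ : Type*} [CommRing Λ] [IsDomain Λ] [StarRing Λ]
    {H : Type*} [AddCommGroup H] [Module Λ H]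
    (ω : SesqForm Λ H) (A : Submodule Λ H) : Prop :=
  A.clos = ω.ann A

/-- The direct sum of two sesquilinear forms. -/
def prodForm {Λ : Type*} [CommRing Λ] [StarRing Λ]
    {H₁ H₂ : Type*} [AddCommGroup H₁] [Module Λ H₁] [AddCommGroup H₂] [Module Λ H₂]
    (ω₁ : SesqForm Λ H₁) (ω₂ : SesqForm Λ H₂) : SesqForm Λ (H₁ × H₂) :=
  LinearMap.mk₂'ₛₗ (RingHom.id Λ) (starRingEnd Λ)
    (fun x y => ω₁ x.1 y.1 + ω₂ x.2 y.2)
    (by intro x x' y; simp [add_add_add_comm])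
    (by intro c x y; simp [smul_eq_mul, mul_add])
    (by intro x y y'; simp [add_add_add_comm])
    (by intro c x y; simp [smul_eq_mul, mul_add])

/-- The composition of two relations (submodules of products). -/
def relComp {Λ : Type*} [CommRing Λ]
    {H₁ H₂ H₃ : Type*} [AddCommGroup H₁] [Module Λ H₁]
    [AddCommGroup H₂] [Module Λ H₂] [AddCommGroup H₃] [Module Λ H₃]
    (N₁ : Submodule Λ (H₁ × H₂)) (N₂ : Submodule Λ (H₂ × H₃)) :
    Submodule Λ (H₁ × H₃) where
  carrier := {p | ∃ h₂ : H₂, (p.1, h₂) ∈ N₁ ∧ (h₂, p.2) ∈ N₂}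
  zero_mem' := ⟨0, N₁.zero_mem, N₂.zero_mem⟩
  add_mem' := by
    rintro p q ⟨a, ha1, ha2⟩ ⟨b, hb1, hb2⟩
    exact ⟨a + b, N₁.add_mem ha1 hb1, N₂.add_mem ha2 hb2⟩
  smul_mem' := by
    rintro c p ⟨a, ha1, ha2⟩
    exact ⟨c • a, N₁.smul_mem c ha1, N₂.smul_mem c ha2⟩

/-!
The map `ω.flip : a ↦ ω(·, a)` is an injective star-semilinear map `H → H^*`. Always
`Ann(A)` is the coannihilator of `ω.flip(A)`, and by skewness `Ann(B)` is the preimage under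
`ω.flip` of the dual annihilator of `B`; so `Ann(Ann(A))` is the preimage of the double
annihilator of the submodule `ω.flip(A)` of `H^*`. Over the fraction field `K`, the double
annihilator of a subspace of the dual of the finite-dimensional space `K ⊗ H` is the subspace
itself; clearing denominators, the double annihilator of a submodule of `H^*` is its
saturation, whose preimage under the injective map `ω.flip` is the saturation of `A`.
-/

namespace Submodule

variable {R : Type*} [CommRing R] [IsDomain R] {M : Type*} [AddCommGroup M] [Module R M]

theorem clos_le_dualCoannihilator_dualAnnihilator (P : Submodule R (Module.Dual R M)) :
    P.clos ≤ P.dualCoannihilator.dualAnnihilator := by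
  rintro φ ⟨c, hc, hcφ⟩
  refine (mem_dualAnnihilator φ).mpr fun m hm ↦ ?_
  have : c * φ m = 0 := (mem_dualCoannihilator m).mp hm _ hcφ
  exact (mul_eq_zero.mp this).resolve_left hc

theorem dualCoannihilator_dualAnnihilator_le_clos [Module.Finite R M]
    (P : Submodule R (Module.Dual R M)) : P.dualCoannihilator.dualAnnihilator ≤ P.clos := by
  intro φ hφ
  let S := nonZeroDivisors R
  let K := FractionRing R
  let f := LocalizedModule.mkLinearMap S M
  let Φ : Module.Dual R M →ₗ[R] Module.Dual K (LocalizedModule S M) :=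
    IsLocalizedModule.mapExtendScalars S f (Algebra.linearMap R K) K
  have hΦ (ψ : Module.Dual R M) (m : M) : Φ ψ (f m) = algebraMap R K (ψ m) :=
    IsLocalizedModule.map_apply S f (Algebra.linearMap R K) ψ m
  have hΦ_inj : Function.Injective Φ := by
    refine (injective_iff_map_eq_zero Φ).mpr fun ψ hψ ↦ LinearMap.ext fun m ↦ ?_
    exact IsFractionRing.injective R K (by simpa [hψ] using (hΦ ψ m).symm)
  let T := span K (Φ '' P)
  have hΦφ : Φ φ ∈ T.dualCoannihilator.dualAnnihilator := by
    refine (mem_dualAnnihilator _).mpr fun v hv ↦ ?_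
    obtain ⟨⟨m, s⟩, hs⟩ := IsLocalizedModule.surj S f v
    have hm : m ∈ P.dualCoannihilator := by
      refine (mem_dualCoannihilator m).mpr fun p hp ↦ IsFractionRing.injective R K ?_
      have hpv : Φ p v = 0 := (mem_dualCoannihilator v).mp hv _ (subset_span ⟨p, hp, rfl⟩)
      rw [← hΦ, ← hs, LinearMap.map_smul_of_tower, hpv, smul_zero, map_zero]
    have : s • Φ φ v = 0 := by
      rw [← LinearMap.map_smul_of_tower, hs, hΦ, (mem_dualAnnihilator φ).mp hφ m hm,
        map_zero]
    simpa [Submonoid.smul_def, nonZeroDivisors.coe_ne_zero s] using this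
  rw [Subspace.dualCoannihilator_dualAnnihilator_eq] at hΦφ
  obtain ⟨t, ht⟩ := multiple_mem_span_of_mem_localization_span S K _ _ hΦφ
  rw [span_image, span_eq] at ht
  obtain ⟨p, hp, hpt⟩ := ht
  refine ⟨t, nonZeroDivisors.coe_ne_zero t, ?_⟩
  rw [← Submonoid.smul_def, ← hΦ_inj (hpt.trans (LinearMap.map_smul_of_tower Φ t φ).symm)]
  exact hp

theorem dualCoannihilator_dualAnnihilator_eq_clos [Module.Finite R M]
    (P : Submodule R (Module.Dual R M)) : P.dualCoannihilator.dualAnnihilator = P.clos :=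
  le_antisymm P.dualCoannihilator_dualAnnihilator_le_clos
    P.clos_le_dualCoannihilator_dualAnnihilator

theorem comap_clos_map {R₂ : Type*} [CommRing R₂] [IsDomain R₂] {N : Type*} [AddCommGroup N]
    [Module R₂ N] {σ : R →+* R₂} {σ' : R₂ →+* R} [RingHomInvPair σ σ'] [RingHomInvPair σ' σ]
    {f : M →ₛₗ[σ] N} (hf : Function.Injective f) (A : Submodule R M) :
    (A.map f).clos.comap f = A.clos := by
  ext x
  constructor
  · rintro ⟨c, hc, a, ha, hac⟩
    have hσ : σ (σ' c) = c := RingHomInvPair.comp_apply_eq₂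
    refine ⟨σ' c, fun h ↦ hc (by rw [← hσ, h, map_zero]), ?_⟩
    have hx : σ' c • x = a := hf (by rw [f.map_smulₛₗ, hσ, hac])
    rwa [hx]
  · rintro ⟨c, hc, hcx⟩
    have hσ : σ' (σ c) = c := RingHomInvPair.comp_apply_eq
    refine ⟨σ c, fun h ↦ hc (by rw [← hσ, h, map_zero]), ?_⟩
    rw [← LinearMap.map_smulₛₗ]
    exact mem_map_of_mem hcx

end Submodule

namespace SesqForm

variable {Λ : Type*} [CommRing Λ] [StarRing Λ] {H : Type*} [AddCommGroup H] [Module Λ H]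

theorem ann_eq_dualCoannihilator_map_flip (ω : SesqForm Λ H) (A : Submodule Λ H) :
    ω.ann A = (A.map ω.flip).dualCoannihilator := by
  ext x
  simp [ann, Submodule.mem_dualCoannihilator]

theorem IsSkew.ann_eq_comap_dualAnnihilator {ω : SesqForm Λ H} (hskew : ω.IsSkew)
    (B : Submodule Λ H) : ω.ann B = B.dualAnnihilator.comap ω.flip := by
  ext x
  simp [ann, Submodule.mem_dualAnnihilator, hskew x]

theorem IsSkew.flip_injective {ω : SesqForm Λ H} (hskew : ω.IsSkew) (hnd : ω.Nondeg) :
    Function.Injective ω.flip := by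
  refine (injective_iff_map_eq_zero _).mpr fun x hx ↦ hnd x fun y ↦ ?_
  rw [hskew, ← ω.flip_apply, hx, LinearMap.zero_apply, star_zero, neg_zero]

end SesqForm

/-- Lemma 1: the double annihilator of a submodule equals its closure. -/
theorem ann_ann_eq_clos
    {Λ : Type*} [CommRing Λ] [IsDomain Λ] [StarRing Λ]
    {H : Type*} [AddCommGroup H] [Module Λ H] [Module.Finite Λ H]
    (ω : SesqForm Λ H) (hskew : ω.IsSkew) (hnd : ω.Nondeg)
    (A : Submodule Λ H) :
    ω.ann (ω.ann A) = A.clos := by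
  rw [hskew.ann_eq_comap_dualAnnihilator, ω.ann_eq_dualCoannihilator_map_flip,
    Submodule.dualCoannihilator_dualAnnihilator_eq_clos,
    Submodule.comap_clos_map (hskew.flip_injective hnd)]
end

section
/- Let A be an isotropic submodule of a Hermitian Λ-module H with Ā = A, and let L ⊆ H be a Lagrangian submodule. Then B = (L + A) ∩ Ann(A) is a Lagrangian submodule of H. -/
open scoped TensorProduct

section Aux

open scoped TensorProduct

variable {Λ : Type*} [CommRing Λ] [IsDomain Λ] [StarRing Λ]
variable {H : Type*} [AddCommGroup H] [Module Λ H]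

namespace SesqForm

lemma mem_ann_iff (ω : SesqForm Λ H) (A : Submodule Λ H) (x : H) :
    x ∈ ω.ann A ↔ ∀ a ∈ A, ω x a = 0 := Iff.rfl

lemma flip_eq_zero {ω : SesqForm Λ H} (hskew : ω.IsSkew) {x y : H}
    (h : ω x y = 0) : ω y x = 0 := by
  rw [hskew y x, h, star_zero, neg_zero]

/-- `y ↦ star (ω s y)` is an honest `Λ`-linear functional. -/
def fn (ω : SesqForm Λ H) (s : H) : H →ₗ[Λ] Λ where
  toFun y := star (ω s y)
  map_add' y z := by simp
  map_smul' c y := by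
    have : (ω s) (c • y) = starRingEnd Λ c * ω s y := by
      rw [map_smulₛₗ]; rfl
    simp only [this, RingHom.id_apply, smul_eq_mul, star_mul', starRingEnd_apply,
      star_star]

@[simp] lemma fn_apply (ω : SesqForm Λ H) (s y : H) : ω.fn s y = star (ω s y) := rfl

set_option synthInstance.maxHeartbeats 1000000 in
set_option maxHeartbeats 1000000 in
/-- The key double annihilator lemma: over a domain, for a nondegenerate
skew-hermitian form on a finitely generated module, `ann (ann S) ≤ clos S`. -/
theorem ann_ann_le_clos [Module.Finite Λ H] (ω : SesqForm Λ H)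
    (hskew : ω.IsSkew) (hnd : ω.Nondeg) (S : Submodule Λ H) :
    ω.ann (ω.ann S) ≤ S.clos := by
  classical
  intro x hx
  set K := FractionRing Λ with hK
  let V := K ⊗[Λ] H
  have hinj : Function.Injective (algebraMap Λ K) := IsFractionRing.injective Λ K
  let F : H → (V →ₗ[K] K) :=
    fun s => LinearMap.liftBaseChange K ((Algebra.linearMap Λ K).comp (ω.fn s))
  have hF : ∀ s h : H, F s ((1 : K) ⊗ₜ[Λ] h) = algebraMap Λ K (star (ω s h)) := by
    intro s h
    show LinearMap.liftBaseChange K ((Algebra.linearMap Λ K).comp (ω.fn s)) ((1:K) ⊗ₜ[Λ] h) = _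
    rw [LinearMap.liftBaseChange_tmul, one_smul]
    rfl
  have hsm : ∀ (cc : Λ) (hh : H), (algebraMap Λ K cc) • ((1:K) ⊗ₜ[Λ] hh)
      = (1:K) ⊗ₜ[Λ] (cc • hh) := by
    intro cc hh
    rw [algebraMap_smul]
    exact (TensorProduct.tmul_smul cc (1:K) hh).symm
  -- every element of V has a multiple of the form 1 ⊗ h
  have hrep : ∀ v : V, ∃ (c : Λ) (h : H), c ≠ 0 ∧
      (algebraMap Λ K c) • v = (1 : K) ⊗ₜ[Λ] h := by
    intro v
    induction v using TensorProduct.induction_on with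
    | zero => exact ⟨1, 0, one_ne_zero, by simp⟩
    | tmul k h =>
        obtain ⟨⟨a, s⟩, hs⟩ := IsLocalization.surj (nonZeroDivisors Λ) k
        refine ⟨s, a • h, nonZeroDivisors.coe_ne_zero s, ?_⟩
        calc (algebraMap Λ K s) • (k ⊗ₜ[Λ] h)
            = ((algebraMap Λ K s) * k) ⊗ₜ[Λ] h := by
              rw [TensorProduct.smul_tmul', smul_eq_mul]
          _ = (algebraMap Λ K a) ⊗ₜ[Λ] h := by rw [mul_comm, hs]
          _ = (a • (1 : K)) ⊗ₜ[Λ] h := by rw [Algebra.smul_def, mul_one]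
          _ = (1 : K) ⊗ₜ[Λ] (a • h) := TensorProduct.smul_tmul _ _ _
    | add v w hv hw =>
        obtain ⟨c₁, h₁, hc₁, e₁⟩ := hv
        obtain ⟨c₂, h₂, hc₂, e₂⟩ := hw
        refine ⟨c₁ * c₂, c₂ • h₁ + c₁ • h₂, mul_ne_zero hc₁ hc₂, ?_⟩
        have t1 : (algebraMap Λ K (c₁ * c₂)) • v = (1:K) ⊗ₜ[Λ] (c₂ • h₁) := by
          rw [map_mul, mul_comm, mul_smul, e₁, hsm]
        have t2 : (algebraMap Λ K (c₁ * c₂)) • w = (1:K) ⊗ₜ[Λ] (c₁ • h₂) := by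
          rw [map_mul, mul_smul, e₂, hsm]
        rw [smul_add, t1, t2, TensorProduct.tmul_add]
  haveI : Module.Finite K V := Module.Finite.base_change Λ K H
  haveI : FiniteDimensional K V := inferInstance
  haveI hfd : FiniteDimensional K (Module.Dual K V) := inferInstance
  let W : Submodule K (Module.Dual K V) :=
    Submodule.span K (Set.range fun s : S => F (s : H))
  have hmem : F x ∈ W := by
    rw [← Subspace.dualCoannihilator_dualAnnihilator_eq (W := W),
      Submodule.mem_dualAnnihilator]
    intro v hv
    rw [Submodule.mem_dualCoannihilator] at hv
    obtain ⟨c, h, hc, hch⟩ := hrep v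
    have hsh : ∀ s ∈ S, ω s h = 0 := by
      intro s hs
      have h1 : F s v = 0 := hv _ (Submodule.subset_span ⟨⟨s, hs⟩, rfl⟩)
      have h2 : F s ((1 : K) ⊗ₜ[Λ] h) = 0 := by
        rw [← hch, map_smul, h1, smul_zero]
      rw [hF] at h2
      have h3 : star (ω s h) = 0 := by
        apply hinj; rw [h2, map_zero]
      exact star_eq_zero.mp h3
    have hh : h ∈ ω.ann S := by
      intro a ha
      exact flip_eq_zero hskew (hsh a ha)
    have hxh : ω x h = 0 := hx h hh
    have h2 : F x ((1 : K) ⊗ₜ[Λ] h) = 0 := by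
      rw [hF, hxh, star_zero, map_zero]
    have h3 : (algebraMap Λ K c) • F x v = 0 := by
      rw [← map_smul, hch, h2]
    have hc' : algebraMap Λ K c ≠ 0 := fun h => hc (hinj (by rw [h, map_zero]))
    simpa [smul_eq_mul, hc'] using h3
  rw [show W = Submodule.span K (Set.range fun s : S => F (s : H)) from rfl,
    Finsupp.mem_span_range_iff_exists_finsupp] at hmem
  obtain ⟨c, hc⟩ := hmem
  obtain ⟨d, hd⟩ := IsLocalization.exist_integer_multiples (nonZeroDivisors Λ) c.support c
  choose! lam hlam using hd
  -- the key identity over Λ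
  have hid : ∀ y : H, (d : Λ) * star (ω x y) =
      ∑ i ∈ c.support, lam i * star (ω (i : H) y) := by
    intro y
    have happ := congrArg (fun φ : V →ₗ[K] K => φ ((1 : K) ⊗ₜ[Λ] y)) hc
    simp only [Finsupp.sum, LinearMap.coe_sum, Finset.sum_apply,
      LinearMap.smul_apply, hF, smul_eq_mul] at happ
    apply hinj
    rw [map_mul, ← happ, map_sum, Finset.mul_sum]
    refine Finset.sum_congr rfl fun i hi => ?_
    rw [map_mul, hlam i hi, Algebra.smul_def]
    ring
  -- conclude via nondegeneracy
  set z : H := star (d : Λ) • x - ∑ i ∈ c.support, star (lam i) • (i : H) with hz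
  have hz0 : z = 0 := by
    apply hnd
    intro y
    have h1 : ω z y = star (d : Λ) * ω x y -
        ∑ i ∈ c.support, star (lam i) * ω (i : H) y := by
      rw [hz, map_sub, map_smul, map_sum, LinearMap.sub_apply, LinearMap.smul_apply,
        LinearMap.sum_apply]
      simp [smul_eq_mul]
    have h2 : star (ω z y) = 0 := by
      rw [h1, star_sub, star_mul', star_star, star_sum]
      simp only [star_mul', star_star]
      rw [hid y]
      exact sub_eq_zero.mpr rfl
    exact star_eq_zero.mp h2
  have hsum : star (d : Λ) • x = ∑ i ∈ c.support, star (lam i) • (i : H) := by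
    rw [← sub_eq_zero]; exact hz0
  refine ⟨star (d : Λ), ?_, ?_⟩
  · intro h
    exact nonZeroDivisors.coe_ne_zero d (star_eq_zero.mp h)
  · rw [hsum]
    exact Submodule.sum_mem _ fun i _ => Submodule.smul_mem _ _ i.2

end SesqForm

end Aux

/-- For a saturated isotropic submodule `A` and a Lagrangian submodule `L` of a
Hermitian module `H`, the submodule `B = (L + A) ∩ Ann(A)` is Lagrangian. -/
theorem sup_inf_ann_lagrangian
    {Λ : Type*} [CommRing Λ] [IsDomain Λ] [StarRing Λ]
    {H : Type*} [AddCommGroup H] [Module Λ H] [Module.Finite Λ H]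
    (ω : SesqForm Λ H) (hskew : ω.IsSkew) (hnd : ω.Nondeg)
    (A L : Submodule Λ H) (hiso : A ≤ ω.ann A) (hsat : A.clos = A)
    (hL : ω.IsLagrangian L) :
    ω.IsLagrangian ((L ⊔ A) ⊓ ω.ann A) := by
  classical
  unfold SesqForm.IsLagrangian
  set B : Submodule Λ H := (L ⊔ A) ⊓ ω.ann A with hB
  have hLann : L ≤ ω.ann L := by
    rw [← hL]; exact fun l hl => ⟨1, one_ne_zero, by simpa using hl⟩
  have hAB : A ≤ B := le_inf le_sup_right hiso
  -- B is isotropic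
  have hBann : B ≤ ω.ann B := by
    intro u hu
    obtain ⟨hu1, hu2⟩ := Submodule.mem_inf.mp hu
    intro v hv
    obtain ⟨hv1, hv2⟩ := Submodule.mem_inf.mp hv
    obtain ⟨l, hl, a, ha, rfl⟩ := Submodule.mem_sup.mp hu1
    obtain ⟨l', hl', a', ha', rfl⟩ := Submodule.mem_sup.mp hv1
    have hlA : l ∈ ω.ann A := by
      have : l = (l + a) - a := by abel
      rw [this]
      exact Submodule.sub_mem _ hu2 (hiso ha)
    have hl'A : l' ∈ ω.ann A := by
      have : l' = (l' + a') - a' := by abel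
      rw [this]
      exact Submodule.sub_mem _ hv2 (hiso ha')
    have e1 : ω l l' = 0 := hLann hl l' hl'
    have e2 : ω l a' = 0 := hlA a' ha'
    have e3 : ω a l' = 0 := SesqForm.flip_eq_zero hskew (hl'A a ha)
    have e4 : ω a a' = 0 := hiso ha a' ha'
    have : ω (l + a) (l' + a') = ω l l' + ω l a' + ω a l' + ω a a' := by
      simp only [map_add, LinearMap.add_apply]
      ring
    rw [this, e1, e2, e3, e4]; simp
  apply le_antisymm
  · -- clos B ≤ ann B
    rintro x ⟨c, hc, hcx⟩
    intro b hb
    have h1 : ω (c • x) b = 0 := hBann hcx b hb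
    have h2 : c * ω x b = 0 := by
      rw [← h1, map_smul, LinearMap.smul_apply, smul_eq_mul]
    rcases mul_eq_zero.mp h2 with h | h
    · exact absurd h hc
    · exact h
  · -- ann B ≤ clos B
    intro x hx
    have hxA : x ∈ ω.ann A := fun a ha => hx a (hAB ha)
    have hxAnn : x ∈ ω.ann (ω.ann (L ⊔ A)) := by
      intro z hz
      have hzL : z ∈ ω.ann L := fun l hl => hz l (Submodule.mem_sup_left hl)
      have hzA : z ∈ ω.ann A := fun a ha => hz a (Submodule.mem_sup_right ha)
      have hzc : z ∈ L.clos := by rw [hL]; exact hzL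
      obtain ⟨c, hc, hcz⟩ := hzc
      have hczB : c • z ∈ B := by
        refine Submodule.mem_inf.mpr ⟨Submodule.mem_sup_left hcz, Submodule.smul_mem _ _ hzA⟩
      have h0 : ω x (c • z) = 0 := hx _ hczB
      have h1 : starRingEnd Λ c * ω x z = 0 := by
        rw [← h0, map_smulₛₗ]; rfl
      rcases mul_eq_zero.mp h1 with h | h
      · exact absurd (star_eq_zero.mp h) hc
      · exact h
    obtain ⟨c, hc, hcx⟩ := SesqForm.ann_ann_le_clos ω hskew hnd (L ⊔ A) hxAnn
    exact ⟨c, hc, Submodule.mem_inf.mpr ⟨hcx, Submodule.smul_mem _ _ hxA⟩⟩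
end

section
/- Let H₁, H₂, H₃ be Hermitian Λ-modules and let H = (−H₁) ⊕ H₂ ⊕ (−H₂) ⊕ H₃ with the direct sum form. Then A = {0 ⊕ h ⊕ h ⊕ 0 | h ∈ H₂} is an isotropic submodule of H with Ā = A and Ann(A) = {h₁ ⊕ h ⊕ h ⊕ h₃ | h₁ ∈ H₁, h ∈ H₂, h₃ ∈ H₃}; the Λ-isomorphism Ann(A)/A → (−H₁) ⊕ H₃ sending (h₁ ⊕ h ⊕ h ⊕ h₃) mod A to h₁ ⊕ h₃ preserves the forms, and under this isomorphism the contraction (N₁ ⊕ N₂)|A corresponds to the composition N₂N₁ for any submodules N₁ ⊆ H₁ ⊕ H₂ and N₂ ⊆ H₂ ⊕ H₃. -/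
open scoped TensorProduct

/-- The direct sum `N₁ ⊕ N₂` of relations, as a submodule of
`H₁ × H₂ × H₂' × H₃`. -/
def sumRel {Λ : Type*} [CommRing Λ]
    {H₁ H₂ H₂' H₃ : Type*} [AddCommGroup H₁] [Module Λ H₁] [AddCommGroup H₂] [Module Λ H₂]
    [AddCommGroup H₂'] [Module Λ H₂'] [AddCommGroup H₃] [Module Λ H₃]
    (N₁ : Submodule Λ (H₁ × H₂)) (N₂ : Submodule Λ (H₂' × H₃)) :
    Submodule Λ (H₁ × H₂ × H₂' × H₃) where
  carrier := {x | (x.1, x.2.1) ∈ N₁ ∧ (x.2.2.1, x.2.2.2) ∈ N₂}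
  zero_mem' := ⟨N₁.zero_mem, N₂.zero_mem⟩
  add_mem' := by
    rintro x y ⟨hx1, hx2⟩ ⟨hy1, hy2⟩
    exact ⟨N₁.add_mem hx1 hy1, N₂.add_mem hx2 hy2⟩
  smul_mem' := by
    rintro c x ⟨h1, h2⟩
    exact ⟨N₁.smul_mem c h1, N₂.smul_mem c h2⟩

/-- The submodule `A = {0 ⊕ h ⊕ h ⊕ 0}` of `H₁ × H₂ × H₂ × H₃`. -/
def diagMid (Λ : Type*) [CommRing Λ]
    (H₁ H₂ H₃ : Type*) [AddCommGroup H₁] [Module Λ H₁] [AddCommGroup H₂] [Module Λ H₂]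
    [AddCommGroup H₃] [Module Λ H₃] :
    Submodule Λ (H₁ × H₂ × H₂ × H₃) where
  carrier := {x | x.1 = 0 ∧ x.2.1 = x.2.2.1 ∧ x.2.2.2 = 0}
  zero_mem' := ⟨rfl, rfl, rfl⟩
  add_mem' := by
    rintro x y ⟨hx1, hx2, hx3⟩ ⟨hy1, hy2, hy3⟩
    refine ⟨?_, ?_, ?_⟩
    · show x.1 + y.1 = 0; rw [hx1, hy1, add_zero]
    · show x.2.1 + y.2.1 = x.2.2.1 + y.2.2.1; rw [hx2, hy2]
    · show x.2.2.2 + y.2.2.2 = 0; rw [hx3, hy3, add_zero]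
  smul_mem' := by
    rintro c x ⟨h1, h2, h3⟩
    refine ⟨?_, ?_, ?_⟩
    · show c • x.1 = 0; rw [h1, smul_zero]
    · show c • x.2.1 = c • x.2.2.1; rw [h2]
    · show c • x.2.2.2 = 0; rw [h3, smul_zero]

/-- The Hermitian form on `(-H₁) ⊕ H₂ ⊕ (-H₂) ⊕ H₃`. -/
def bigForm {Λ : Type*} [CommRing Λ] [StarRing Λ]
    {H₁ H₂ H₃ : Type*} [AddCommGroup H₁] [Module Λ H₁] [AddCommGroup H₂] [Module Λ H₂]
    [AddCommGroup H₃] [Module Λ H₃]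
    (ω₁ : SesqForm Λ H₁) (ω₂ : SesqForm Λ H₂) (ω₃ : SesqForm Λ H₃) :
    SesqForm Λ (H₁ × H₂ × H₂ × H₃) :=
  prodForm (-ω₁) (prodForm ω₂ (prodForm (-ω₂) ω₃))


lemma bigForm_apply {Λ : Type*} [CommRing Λ] [StarRing Λ]
    {H₁ H₂ H₃ : Type*} [AddCommGroup H₁] [Module Λ H₁] [AddCommGroup H₂] [Module Λ H₂]
    [AddCommGroup H₃] [Module Λ H₃]
    (ω₁ : SesqForm Λ H₁) (ω₂ : SesqForm Λ H₂) (ω₃ : SesqForm Λ H₃)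
    (x y : H₁ × H₂ × H₂ × H₃) :
    bigForm ω₁ ω₂ ω₃ x y =
      -(ω₁ x.1 y.1) + (ω₂ x.2.1 y.2.1 + (-(ω₂ x.2.2.1 y.2.2.1) + ω₃ x.2.2.2 y.2.2.2)) := rfl

lemma nondeg_torsionfree {Λ : Type*} [CommRing Λ] [IsDomain Λ] [StarRing Λ]
    {H : Type*} [AddCommGroup H] [Module Λ H] {ω : SesqForm Λ H} (hn : ω.Nondeg)
    {c : Λ} (hc : c ≠ 0) {x : H} (h : c • x = 0) : x = 0 := by
  apply hn
  intro y
  have : ω (c • x) y = 0 := by rw [h]; simp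
  rw [map_smul] at this
  exact (mul_eq_zero.mp this).resolve_left hc

/-- The key computation behind Lemma 5: in `H = (-H₁) ⊕ H₂ ⊕ (-H₂) ⊕ H₃`, the
submodule `A = {0 ⊕ h ⊕ h ⊕ 0}` is saturated isotropic, its annihilator is
`{h₁ ⊕ h ⊕ h ⊕ h₃}`, `Ann(A)/A` is isometric to `(-H₁) ⊕ H₃` via
`(h₁ ⊕ h ⊕ h ⊕ h₃) mod A ↦ h₁ ⊕ h₃`, and under this isometry the contraction
`(N₁ ⊕ N₂)|A` corresponds to the composition `N₂N₁`. -/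
theorem contraction_is_composition
    {Λ : Type*} [CommRing Λ] [IsDomain Λ] [StarRing Λ]
    {H₁ H₂ H₃ : Type*}
    [AddCommGroup H₁] [Module Λ H₁] [Module.Finite Λ H₁]
    [AddCommGroup H₂] [Module Λ H₂] [Module.Finite Λ H₂]
    [AddCommGroup H₃] [Module Λ H₃] [Module.Finite Λ H₃]
    (ω₁ : SesqForm Λ H₁) (ω₂ : SesqForm Λ H₂) (ω₃ : SesqForm Λ H₃)
    (h₁s : ω₁.IsSkew) (h₁n : ω₁.Nondeg)
    (h₂s : ω₂.IsSkew) (h₂n : ω₂.Nondeg)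
    (h₃s : ω₃.IsSkew) (h₃n : ω₃.Nondeg) :
    diagMid Λ H₁ H₂ H₃ ≤ (bigForm ω₁ ω₂ ω₃).ann (diagMid Λ H₁ H₂ H₃) ∧
    (diagMid Λ H₁ H₂ H₃).clos = diagMid Λ H₁ H₂ H₃ ∧
    ((bigForm ω₁ ω₂ ω₃).ann (diagMid Λ H₁ H₂ H₃) : Set (H₁ × H₂ × H₂ × H₃)) =
      {x : H₁ × H₂ × H₂ × H₃ | x.2.1 = x.2.2.1} ∧
    ∃ e : (↥((bigForm ω₁ ω₂ ω₃).ann (diagMid Λ H₁ H₂ H₃)) ⧸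
            (diagMid Λ H₁ H₂ H₃).comap ((bigForm ω₁ ω₂ ω₃).ann (diagMid Λ H₁ H₂ H₃)).subtype)
          ≃ₗ[Λ] H₁ × H₃,
      (∀ x : (bigForm ω₁ ω₂ ω₃).ann (diagMid Λ H₁ H₂ H₃),
        e (Submodule.Quotient.mk x) =
          ((x : H₁ × H₂ × H₂ × H₃).1, (x : H₁ × H₂ × H₂ × H₃).2.2.2)) ∧
      (∀ x y : (bigForm ω₁ ω₂ ω₃).ann (diagMid Λ H₁ H₂ H₃),
        prodForm (-ω₁) ω₃ (e (Submodule.Quotient.mk x)) (e (Submodule.Quotient.mk y)) =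
          bigForm ω₁ ω₂ ω₃ (x : H₁ × H₂ × H₂ × H₃) (y : H₁ × H₂ × H₂ × H₃)) ∧
      (∀ (N₁ : Submodule Λ (H₁ × H₂)) (N₂ : Submodule Λ (H₂ × H₃)),
        Submodule.map e.toLinearMap
          (Submodule.map ((diagMid Λ H₁ H₂ H₃).comap
              ((bigForm ω₁ ω₂ ω₃).ann (diagMid Λ H₁ H₂ H₃)).subtype).mkQ
            ((((sumRel N₁ N₂) ⊔ diagMid Λ H₁ H₂ H₃) ⊓
                (bigForm ω₁ ω₂ ω₃).ann (diagMid Λ H₁ H₂ H₃)).comap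
              ((bigForm ω₁ ω₂ ω₃).ann (diagMid Λ H₁ H₂ H₃)).subtype))
          = relComp N₁ N₂) := by
  set A := diagMid Λ H₁ H₂ H₃ with hAdef
  set ω := bigForm ω₁ ω₂ ω₃ with hωdef
  have hann : ∀ x : H₁ × H₂ × H₂ × H₃, x ∈ ω.ann A ↔ x.2.1 = x.2.2.1 := by
    intro x
    constructor
    · intro hx
      have key : ∀ h : H₂, ω₂ (x.2.1 - x.2.2.1) h = 0 := by
        intro h
        have h0 := hx (0, h, h, 0) ⟨rfl, rfl, rfl⟩
        rw [hωdef, bigForm_apply] at h0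
        simp only [map_sub, LinearMap.sub_apply]
        simp at h0
        linear_combination h0
      have := h₂n _ key
      rwa [sub_eq_zero] at this
    · intro hx a ha
      obtain ⟨ha1, ha2, ha3⟩ := ha
      rw [hωdef, bigForm_apply, ha1, ha3, hx, ha2]
      simp
  refine ⟨?_, ?_, ?_, ?_⟩
  · intro x hx
    exact (hann x).mpr hx.2.1
  · apply le_antisymm
    · rintro x ⟨c, hc, hcx⟩
      obtain ⟨h1, h2, h3⟩ := hcx
      refine ⟨nondeg_torsionfree h₁n hc h1, ?_, nondeg_torsionfree h₃n hc h3⟩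
      have : c • (x.2.1 - x.2.2.1) = 0 := by
        rw [smul_sub, sub_eq_zero]; exact h2
      have := nondeg_torsionfree h₂n hc this
      rwa [sub_eq_zero] at this
    · intro x hx
      exact ⟨1, one_ne_zero, by simpa using hx⟩
  · ext x
    exact hann x
  · set f : ↥(ω.ann A) →ₗ[Λ] H₁ × H₃ :=
      { toFun := fun x => ((x : H₁ × H₂ × H₂ × H₃).1, (x : H₁ × H₂ × H₂ × H₃).2.2.2)
        map_add' := fun x y => rfl
        map_smul' := fun c x => rfl } with hf
    have hsurj : Function.Surjective f := by
      rintro ⟨a, c⟩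
      exact ⟨⟨(a, 0, 0, c), (hann _).mpr rfl⟩, rfl⟩
    have hker : A.comap (ω.ann A).subtype = LinearMap.ker f := by
      ext x
      constructor
      · rintro ⟨h1, _, h3⟩
        simp only [LinearMap.mem_ker, hf, LinearMap.coe_mk, AddHom.coe_mk]
        exact Prod.ext h1 h3
      · intro h
        have h' : ((x : H₁ × H₂ × H₂ × H₃).1, (x : H₁ × H₂ × H₂ × H₃).2.2.2)
            = (0, 0) := h
        exact ⟨congrArg Prod.fst h', (hann _).mp x.2, congrArg Prod.snd h'⟩
    refine ⟨(Submodule.quotEquivOfEq _ _ hker).trans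
      (f.quotKerEquivOfSurjective hsurj), ?_, ?_, ?_⟩
    · intro x; rfl
    · intro x y
      have hx := (hann _).mp x.2
      have hy := (hann _).mp y.2
      show prodForm (-ω₁) ω₃
        ((x : H₁ × H₂ × H₂ × H₃).1, (x : H₁ × H₂ × H₂ × H₃).2.2.2)
        ((y : H₁ × H₂ × H₂ × H₃).1, (y : H₁ × H₂ × H₂ × H₃).2.2.2) = _
      show -(ω₁ (x : H₁ × H₂ × H₂ × H₃).1 (y : H₁ × H₂ × H₂ × H₃).1) +
          ω₃ (x : H₁ × H₂ × H₂ × H₃).2.2.2 (y : H₁ × H₂ × H₂ × H₃).2.2.2 =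
        -(ω₁ (x : H₁ × H₂ × H₂ × H₃).1 (y : H₁ × H₂ × H₂ × H₃).1) +
          (ω₂ (x : H₁ × H₂ × H₂ × H₃).2.1 (y : H₁ × H₂ × H₂ × H₃).2.1 +
            (-(ω₂ (x : H₁ × H₂ × H₂ × H₃).2.2.1 (y : H₁ × H₂ × H₂ × H₃).2.2.1) +
              ω₃ (x : H₁ × H₂ × H₂ × H₃).2.2.2 (y : H₁ × H₂ × H₂ × H₃).2.2.2))
      rw [hx, hy]
      ring
    · intro N₁ N₂
      ext p
      simp only [Submodule.mem_map, Submodule.mem_comap]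
      constructor
      · rintro ⟨q, ⟨x, hxS, rfl⟩, rfl⟩
        obtain ⟨hxsup, -⟩ := hxS
        have hxsup' : (x : H₁ × H₂ × H₂ × H₃) ∈ sumRel N₁ N₂ ⊔ A := hxsup
        obtain ⟨s, hs, d, hd, hsd⟩ := Submodule.mem_sup.mp hxsup' 
        obtain ⟨hs1, hs2⟩ := hs
        obtain ⟨hd1, hd2, hd3⟩ := hd
        have hxmid := (hann _).mp x.2
        have e1 : (x : H₁ × H₂ × H₂ × H₃).1 = s.1 := by
          rw [← hsd]; show s.1 + d.1 = s.1; rw [hd1, add_zero]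
        have e3 : (x : H₁ × H₂ × H₂ × H₃).2.2.2 = s.2.2.2 := by
          rw [← hsd]; show s.2.2.2 + d.2.2.2 = s.2.2.2; rw [hd3, add_zero]
        have emid : s.2.1 = s.2.2.1 := by
          have h21 : (x : H₁ × H₂ × H₂ × H₃).2.1 = s.2.1 + d.2.1 := by rw [← hsd]; rfl
          have h221 : (x : H₁ × H₂ × H₂ × H₃).2.2.1 = s.2.2.1 + d.2.2.1 := by
            rw [← hsd]; rfl
          have := hxmid
          rw [h21, h221, hd2] at this
          exact add_right_cancel this
        refine ⟨s.2.1, ?_, ?_⟩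
        · show ((x : H₁ × H₂ × H₂ × H₃).1, s.2.1) ∈ N₁
          rw [e1]; exact hs1
        · show (s.2.1, (x : H₁ × H₂ × H₂ × H₃).2.2.2) ∈ N₂
          rw [emid, e3]; exact hs2
      · rintro ⟨h, hN1, hN2⟩
        refine ⟨Submodule.Quotient.mk ⟨(p.1, h, h, p.2), (hann _).mpr rfl⟩,
          ⟨⟨(p.1, h, h, p.2), (hann _).mpr rfl⟩, ?_, rfl⟩, rfl⟩
        exact ⟨Submodule.mem_sup_left ⟨hN1, hN2⟩, (hann _).mpr rfl⟩
end

section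
/- (Lemma 7) Let H₁, H₂, H₃ be Hermitian Λ-modules. For any submodules N₁ ⊆ H₁ ⊕ H₂ and N₂ ⊆ H₂ ⊕ H₃, the closure of the composition N₂N₁ in H₁ ⊕ H₃ equals the closure of the composition N̄₂N̄₁ of the closures: (N₂N₁)‾ = (N̄₂N̄₁)‾. -/
open scoped TensorProduct

lemma Submodule.mem_clos_iff {Λ : Type*} [CommRing Λ] [IsDomain Λ] {H : Type*}
    [AddCommGroup H] [Module Λ H] (A : Submodule Λ H) (x : H) :
    x ∈ A.clos ↔ ∃ c : Λ, c ≠ 0 ∧ c • x ∈ A := Iff.rfl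

lemma mem_relComp_iff {Λ : Type*} [CommRing Λ]
    {H₁ H₂ H₃ : Type*} [AddCommGroup H₁] [Module Λ H₁]
    [AddCommGroup H₂] [Module Λ H₂] [AddCommGroup H₃] [Module Λ H₃]
    (N₁ : Submodule Λ (H₁ × H₂)) (N₂ : Submodule Λ (H₂ × H₃)) (p : H₁ × H₃) :
    p ∈ relComp N₁ N₂ ↔ ∃ h₂ : H₂, (p.1, h₂) ∈ N₁ ∧ (h₂, p.2) ∈ N₂ := Iff.rfl

/-- Lemma 7: the closure of the composition equals the closure of the
composition of the closures. -/
theorem clos_relComp_clos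
    {Λ : Type*} [CommRing Λ] [IsDomain Λ] [StarRing Λ]
    {H₁ H₂ H₃ : Type*}
    [AddCommGroup H₁] [Module Λ H₁] [Module.Finite Λ H₁]
    [AddCommGroup H₂] [Module Λ H₂] [Module.Finite Λ H₂]
    [AddCommGroup H₃] [Module Λ H₃] [Module.Finite Λ H₃]
    (ω₁ : SesqForm Λ H₁) (ω₂ : SesqForm Λ H₂) (ω₃ : SesqForm Λ H₃)
    (h₁s : ω₁.IsSkew) (h₁n : ω₁.Nondeg)
    (h₂s : ω₂.IsSkew) (h₂n : ω₂.Nondeg)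
    (h₃s : ω₃.IsSkew) (h₃n : ω₃.Nondeg)
    (N₁ : Submodule Λ (H₁ × H₂)) (N₂ : Submodule Λ (H₂ × H₃)) :
    (relComp N₁ N₂).clos = (relComp N₁.clos N₂.clos).clos := by
  ext x
  simp only [Submodule.mem_clos_iff, mem_relComp_iff] at *
  constructor
  · rintro ⟨c, hc, h₂, h1, h2⟩
    exact ⟨c, hc, h₂, ⟨1, one_ne_zero, by simpa using h1⟩,
      ⟨1, one_ne_zero, by simpa using h2⟩⟩
  · rintro ⟨c, hc, h₂, ⟨a, ha, h1⟩, ⟨b, hb, h2⟩⟩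
    refine ⟨b * a * c, mul_ne_zero (mul_ne_zero hb ha) hc, (b * a) • h₂, ?_, ?_⟩
    · have h := N₁.smul_mem b h1
      have e : (((b * a * c) • x).1, (b * a) • h₂) = b • a • ((c • x).1, h₂) := by
        simp only [Prod.smul_mk, Prod.smul_fst, Prod.mk.injEq]
        constructor
        · rw [← mul_smul, ← mul_smul]
        · rw [← mul_smul]
      rw [e]; exact h
    · have h := N₂.smul_mem a h2
      have e : ((b * a) • h₂, ((b * a * c) • x).2) = a • b • (h₂, (c • x).2) := by
        simp only [Prod.smul_mk, Prod.smul_snd, Prod.mk.injEq]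
        constructor
        · rw [← mul_smul, mul_comm a b]
        · rw [← mul_smul, ← mul_smul, mul_comm a b]
      rw [e]; exact h
end

section
/- (Theorem 8, associativity) Let H₁, H₂, H₃, H₄ be Hermitian Λ-modules and let N₁ : H₁ ⇒ H₂, N₂ : H₂ ⇒ H₃, N₃ : H₃ ⇒ H₄ be Lagrangian relations with N̄ᵢ = Nᵢ for i = 1, 2, 3. Define N ∘ M = (NM)‾, the closure of the composition. Then N₃ ∘ (N₂ ∘ N₁) = (N₃ ∘ N₂) ∘ N₁. -/
open scoped TensorProduct

section Aux

variable {Λ : Type*} [CommRing Λ] [IsDomain Λ]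
variable {H₁ H₂ H₃ H₄ : Type*} [AddCommGroup H₁] [Module Λ H₁]
  [AddCommGroup H₂] [Module Λ H₂] [AddCommGroup H₃] [Module Λ H₃]
  [AddCommGroup H₄] [Module Λ H₄]

lemma clos_le_clos {H : Type*} [AddCommGroup H] [Module Λ H]
    {A B : Submodule Λ H} (h : A ≤ B) : A.clos ≤ B.clos := by
  rintro x ⟨c, hc, hx⟩; exact ⟨c, hc, h hx⟩

lemma le_clos {H : Type*} [AddCommGroup H] [Module Λ H] (A : Submodule Λ H) :
    A ≤ A.clos := fun x hx => ⟨1, one_ne_zero, by simpa using hx⟩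

lemma clos_clos {H : Type*} [AddCommGroup H] [Module Λ H] (A : Submodule Λ H) :
    A.clos.clos = A.clos := by
  refine le_antisymm ?_ (le_clos _)
  rintro x ⟨c, hc, d, hd, hx⟩
  exact ⟨d * c, mul_ne_zero hd hc, by rwa [mul_smul]⟩

lemma relComp_clos_right (N : Submodule Λ (H₁ × H₂)) (M : Submodule Λ (H₂ × H₃)) :
    (relComp N M.clos).clos = (relComp N M).clos := by
  refine le_antisymm ?_ (clos_le_clos fun p ⟨a, h1, h2⟩ => ⟨a, h1, le_clos M h2⟩)
  rw [← clos_clos (relComp N M)]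
  refine clos_le_clos ?_
  rintro p ⟨a, h1, c, hc, h2⟩
  exact ⟨c, hc, c • a, by simpa using N.smul_mem c h1, by simpa using h2⟩

lemma relComp_clos_left (N : Submodule Λ (H₁ × H₂)) (M : Submodule Λ (H₂ × H₃)) :
    (relComp N.clos M).clos = (relComp N M).clos := by
  refine le_antisymm ?_ (clos_le_clos fun p ⟨a, h1, h2⟩ => ⟨a, le_clos N h1, h2⟩)
  rw [← clos_clos (relComp N M)]
  refine clos_le_clos ?_
  rintro p ⟨a, ⟨c, hc, h1⟩, h2⟩
  exact ⟨c, hc, c • a, by simpa using h1, by simpa using M.smul_mem c h2⟩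

lemma relComp_assoc (N₁ : Submodule Λ (H₁ × H₂)) (N₂ : Submodule Λ (H₂ × H₃))
    (N₃ : Submodule Λ (H₃ × H₄)) :
    relComp N₁ (relComp N₂ N₃) = relComp (relComp N₁ N₂) N₃ := by
  ext p
  constructor
  · rintro ⟨a, h1, b, h2, h3⟩; exact ⟨b, ⟨a, h1, h2⟩, h3⟩
  · rintro ⟨b, ⟨a, h1, h2⟩, h3⟩; exact ⟨a, h1, b, h2, h3⟩

end Aux

/-- Theorem 8 (associativity): for saturated Lagrangian relations, the closed
composition `N ∘ M = closure (N M)` is associative. -/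
theorem closed_comp_assoc
    {Λ : Type*} [CommRing Λ] [IsDomain Λ] [StarRing Λ]
    {H₁ H₂ H₃ H₄ : Type*}
    [AddCommGroup H₁] [Module Λ H₁] [Module.Finite Λ H₁]
    [AddCommGroup H₂] [Module Λ H₂] [Module.Finite Λ H₂]
    [AddCommGroup H₃] [Module Λ H₃] [Module.Finite Λ H₃]
    [AddCommGroup H₄] [Module Λ H₄] [Module.Finite Λ H₄]
    (ω₁ : SesqForm Λ H₁) (ω₂ : SesqForm Λ H₂) (ω₃ : SesqForm Λ H₃) (ω₄ : SesqForm Λ H₄)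
    (h₁s : ω₁.IsSkew) (h₁n : ω₁.Nondeg)
    (h₂s : ω₂.IsSkew) (h₂n : ω₂.Nondeg)
    (h₃s : ω₃.IsSkew) (h₃n : ω₃.Nondeg)
    (h₄s : ω₄.IsSkew) (h₄n : ω₄.Nondeg)
    (N₁ : Submodule Λ (H₁ × H₂)) (N₂ : Submodule Λ (H₂ × H₃)) (N₃ : Submodule Λ (H₃ × H₄))
    (hN₁ : (prodForm (-ω₁) ω₂).IsLagrangian N₁) (hN₁sat : N₁.clos = N₁)
    (hN₂ : (prodForm (-ω₂) ω₃).IsLagrangian N₂) (hN₂sat : N₂.clos = N₂)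
    (hN₃ : (prodForm (-ω₃) ω₄).IsLagrangian N₃) (hN₃sat : N₃.clos = N₃) :
    (relComp N₁ (relComp N₂ N₃).clos).clos = (relComp (relComp N₁ N₂).clos N₃).clos := by
  rw [relComp_clos_right, relComp_clos_left, relComp_assoc]
end

section
/- (Lemma 9) Let H₁, H₂ be Hermitian Λ-modules and let φ : H₁ ⊗_Λ Q → H₂ ⊗_Λ Q be a unitary Q-isomorphism, where Q is the field of fractions of Λ. Then the restricted graph Γ⁰_φ = {h ⊕ φ(h) | h ∈ H₁, φ(h) ∈ H₂} is a Lagrangian submodule of (−H₁) ⊕ H₂. -/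
open scoped TensorProduct

/-- The restricted graph of a `Q`-isomorphism
`φ : Q ⊗ H₁ → Q ⊗ H₂`, as a submodule of `H₁ × H₂`. -/
def resGraph {Λ : Type*} [CommRing Λ] [IsDomain Λ]
    {H₁ H₂ : Type*} [AddCommGroup H₁] [Module Λ H₁] [AddCommGroup H₂] [Module Λ H₂]
    (φ : (FractionRing Λ ⊗[Λ] H₁) ≃ₗ[FractionRing Λ] (FractionRing Λ ⊗[Λ] H₂)) :
    Submodule Λ (H₁ × H₂) where
  carrier := {p | φ ((1 : FractionRing Λ) ⊗ₜ[Λ] p.1) = (1 : FractionRing Λ) ⊗ₜ[Λ] p.2}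
  zero_mem' := by
    show φ ((1 : FractionRing Λ) ⊗ₜ[Λ] (0 : H₁)) = (1 : FractionRing Λ) ⊗ₜ[Λ] (0 : H₂)
    simp
  add_mem' := by
    intro x y hx hy
    show φ ((1 : FractionRing Λ) ⊗ₜ[Λ] (x.1 + y.1)) = (1 : FractionRing Λ) ⊗ₜ[Λ] (x.2 + y.2)
    rw [TensorProduct.tmul_add, TensorProduct.tmul_add, map_add, hx, hy]
  smul_mem' := by
    intro c x hx
    show φ ((1 : FractionRing Λ) ⊗ₜ[Λ] (c • x.1)) = (1 : FractionRing Λ) ⊗ₜ[Λ] (c • x.2)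
    rw [TensorProduct.tmul_smul, TensorProduct.tmul_smul,
      ← algebraMap_smul (FractionRing Λ) c, ← algebraMap_smul (FractionRing Λ) c
        ((1 : FractionRing Λ) ⊗ₜ[Λ] x.2), map_smul, hx]

lemma exists_denom_tensor {Λ : Type*} [CommRing Λ] [IsDomain Λ]
    {M : Type*} [AddCommGroup M] [Module Λ M]
    (z : FractionRing Λ ⊗[Λ] M) :
    ∃ d : Λ, d ≠ 0 ∧ ∃ m : M,
      (algebraMap Λ (FractionRing Λ) d) • z = (1 : FractionRing Λ) ⊗ₜ[Λ] m := by
  induction z using TensorProduct.induction_on with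
  | zero => exact ⟨1, one_ne_zero, 0, by simp⟩
  | tmul q h =>
    obtain ⟨⟨a, s⟩, hs⟩ := IsLocalization.surj (nonZeroDivisors Λ) q
    refine ⟨s, nonZeroDivisors.coe_ne_zero s, a • h, ?_⟩
    rw [TensorProduct.smul_tmul', TensorProduct.tmul_smul,
      ← algebraMap_smul (FractionRing Λ) a, TensorProduct.smul_tmul']
    rw [smul_eq_mul, smul_eq_mul, mul_one, mul_comm, hs]
  | add z₁ z₂ ih₁ ih₂ =>
    obtain ⟨d₁, hd₁, m₁, hm₁⟩ := ih₁
    obtain ⟨d₂, hd₂, m₂, hm₂⟩ := ih₂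
    refine ⟨d₁ * d₂, mul_ne_zero hd₁ hd₂, d₂ • m₁ + d₁ • m₂, ?_⟩
    rw [smul_add, map_mul, TensorProduct.tmul_add, TensorProduct.tmul_smul,
      TensorProduct.tmul_smul, ← hm₁, ← hm₂,
      ← algebraMap_smul (FractionRing Λ) d₂, ← algebraMap_smul (FractionRing Λ) d₁,
      mul_smul, mul_smul]
    rw [smul_comm]

/-- Lemma 9: the restricted graph of a unitary `Q`-isomorphism is a Lagrangian
submodule of `(-H₁) ⊕ H₂`. -/
theorem resGraph_lagrangian
    {Λ : Type*} [CommRing Λ] [IsDomain Λ] [StarRing Λ]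
    {H₁ H₂ : Type*}
    [AddCommGroup H₁] [Module Λ H₁] [Module.Finite Λ H₁]
    [AddCommGroup H₂] [Module Λ H₂] [Module.Finite Λ H₂]
    (ω₁ : SesqForm Λ H₁) (ω₂ : SesqForm Λ H₂)
    (h₁s : ω₁.IsSkew) (h₁n : ω₁.Nondeg)
    (h₂s : ω₂.IsSkew) (h₂n : ω₂.Nondeg)
    (starQ : FractionRing Λ →+* FractionRing Λ)
    (hstarQinv : ∀ q : FractionRing Λ, starQ (starQ q) = q)
    (hstarQalg : ∀ a : Λ,
      starQ (algebraMap Λ (FractionRing Λ) a) = algebraMap Λ (FractionRing Λ) (star a))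
    (Ω₁ : (FractionRing Λ ⊗[Λ] H₁) → (FractionRing Λ ⊗[Λ] H₁) → FractionRing Λ)
    (hΩ₁addl : ∀ x x' y, Ω₁ (x + x') y = Ω₁ x y + Ω₁ x' y)
    (hΩ₁smull : ∀ (q : FractionRing Λ) x y, Ω₁ (q • x) y = q * Ω₁ x y)
    (hΩ₁addr : ∀ x y y', Ω₁ x (y + y') = Ω₁ x y + Ω₁ x y')
    (hΩ₁smulr : ∀ (q : FractionRing Λ) x y, Ω₁ x (q • y) = starQ q * Ω₁ x y)
    (hΩ₁ext : ∀ x y : H₁,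
      Ω₁ ((1 : FractionRing Λ) ⊗ₜ[Λ] x) ((1 : FractionRing Λ) ⊗ₜ[Λ] y) = algebraMap Λ (FractionRing Λ) (ω₁ x y))
    (Ω₂ : (FractionRing Λ ⊗[Λ] H₂) → (FractionRing Λ ⊗[Λ] H₂) → FractionRing Λ)
    (hΩ₂addl : ∀ x x' y, Ω₂ (x + x') y = Ω₂ x y + Ω₂ x' y)
    (hΩ₂smull : ∀ (q : FractionRing Λ) x y, Ω₂ (q • x) y = q * Ω₂ x y)
    (hΩ₂addr : ∀ x y y', Ω₂ x (y + y') = Ω₂ x y + Ω₂ x y')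
    (hΩ₂smulr : ∀ (q : FractionRing Λ) x y, Ω₂ x (q • y) = starQ q * Ω₂ x y)
    (hΩ₂ext : ∀ x y : H₂,
      Ω₂ ((1 : FractionRing Λ) ⊗ₜ[Λ] x) ((1 : FractionRing Λ) ⊗ₜ[Λ] y) = algebraMap Λ (FractionRing Λ) (ω₂ x y))
    (φ : (FractionRing Λ ⊗[Λ] H₁) ≃ₗ[FractionRing Λ] (FractionRing Λ ⊗[Λ] H₂))
    (hφ : ∀ x y, Ω₂ (φ x) (φ y) = Ω₁ x y) :
    (prodForm (-ω₁) ω₂).IsLagrangian (resGraph φ) := by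
  set Q := FractionRing Λ
  set ι := algebraMap Λ Q with hι
  have inj : Function.Injective ι := IsFractionRing.injective Λ Q
  have ιne : ∀ {d : Λ}, d ≠ 0 → ι d ≠ 0 := fun hd h =>
    hd (inj (by rw [h, map_zero]))
  -- subtraction rule for Ω₂ in first variable
  have hΩ₂subl : ∀ u v w, Ω₂ (u - v) w = Ω₂ u w - Ω₂ v w := by
    intro u v w
    have : Ω₂ (-v) w = - Ω₂ v w := by
      rw [(neg_one_smul Q v).symm, hΩ₂smull]; ring
    rw [sub_eq_add_neg, hΩ₂addl, this, sub_eq_add_neg]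
  -- tmul of Λ-smul as Q-smul
  have tsmul₁ : ∀ (c : Λ) (h : H₁),
      (1 : Q) ⊗ₜ[Λ] (c • h) = ι c • ((1 : Q) ⊗ₜ[Λ] h) := by
    intro c h; rw [TensorProduct.tmul_smul, algebraMap_smul]
  have tsmul₂ : ∀ (c : Λ) (h : H₂),
      (1 : Q) ⊗ₜ[Λ] (c • h) = ι c • ((1 : Q) ⊗ₜ[Λ] h) := by
    intro c h; rw [TensorProduct.tmul_smul, algebraMap_smul]
  -- Step A: forms agree on pairs of graph elements
  have stepA : ∀ x a : H₁ × H₂, x ∈ resGraph φ → a ∈ resGraph φ →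
      ω₁ x.1 a.1 = ω₂ x.2 a.2 := by
    intro x a hx ha
    apply inj
    rw [← hΩ₁ext, ← hΩ₂ext, ← hx, ← ha, hφ]
  -- Step B: nondegeneracy of Ω₂ against integral vectors
  have stepB : ∀ z : Q ⊗[Λ] H₂, (∀ b : H₂, Ω₂ z ((1 : Q) ⊗ₜ[Λ] b) = 0) → z = 0 := by
    intro z hz
    obtain ⟨d, hd, m, hm⟩ := exists_denom_tensor z
    have hm0 : m = 0 := by
      apply h₂n
      intro y
      apply inj
      rw [← hΩ₂ext, ← hm, hΩ₂smull, hz, mul_zero, map_zero]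
    rw [hm0, TensorProduct.tmul_zero] at hm
    calc z = (ι d)⁻¹ • (ι d • z) := (inv_smul_smul₀ (ιne hd) z).symm
      _ = 0 := by rw [hm, smul_zero]
  have hGraph : ∀ p : H₁ × H₂, p ∈ resGraph φ ↔
      φ ((1 : Q) ⊗ₜ[Λ] p.1) = (1 : Q) ⊗ₜ[Λ] p.2 := fun p => Iff.rfl
  ext x
  constructor
  · rintro ⟨c, hc, hcx⟩
    -- closure of graph is the graph
    have hx : x ∈ resGraph φ := by
      rw [hGraph] at hcx ⊢
      have : ι c • φ ((1 : Q) ⊗ₜ[Λ] x.1) = ι c • ((1 : Q) ⊗ₜ[Λ] x.2) := by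
        rw [← map_smul, ← tsmul₁, ← tsmul₂]; exact hcx
      rw [← inv_smul_smul₀ (ιne hc) (φ ((1 : Q) ⊗ₜ[Λ] x.1)), this,
        inv_smul_smul₀ (ιne hc)]
    intro a ha
    have := stepA x a hx ha
    show -(ω₁ x.1 a.1) + ω₂ x.2 a.2 = 0
    rw [this, neg_add_cancel]
  · intro hx
    refine ⟨1, one_ne_zero, ?_⟩
    rw [one_smul, hGraph]
    have key : ∀ b : H₂,
        Ω₂ (φ ((1 : Q) ⊗ₜ[Λ] x.1) - (1 : Q) ⊗ₜ[Λ] x.2) ((1 : Q) ⊗ₜ[Λ] b) = 0 := by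
      intro b
      obtain ⟨d, hd, a₁, ha₁⟩ := exists_denom_tensor (φ.symm ((1 : Q) ⊗ₜ[Λ] b))
      have hga : φ ((1 : Q) ⊗ₜ[Λ] a₁) = (1 : Q) ⊗ₜ[Λ] (d • b) := by
        rw [← ha₁, map_smul, φ.apply_symm_apply, tsmul₂]
      have hmem : ((a₁, d • b) : H₁ × H₂) ∈ resGraph φ := hga
      have hann := hx _ hmem
      have hann' : ω₁ x.1 a₁ = ω₂ x.2 (d • b) := by
        have h0 : -(ω₁ x.1 a₁) + ω₂ x.2 (d • b) = 0 := hann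
        linear_combination -h0
      have hzero : Ω₂ (φ ((1 : Q) ⊗ₜ[Λ] x.1) - (1 : Q) ⊗ₜ[Λ] x.2)
          ((1 : Q) ⊗ₜ[Λ] (d • b)) = 0 := by
        rw [hΩ₂subl, ← hga, hφ, hΩ₁ext, hga, hΩ₂ext, hann', sub_self]
      rw [tsmul₂, hΩ₂smulr, hstarQalg] at hzero
      rcases mul_eq_zero.mp hzero with h | h
      · exact absurd h (ιne (by simpa using fun hs : star d = 0 => hd (by
          have := congrArg star hs; simpa using this)))
      · exact h
    have := stepB _ key
    have := sub_eq_zero.mp this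
    exact this
end

section
/- (Theorem 10, functoriality of restricted graphs) Let H₁, H₂, H₃ be Hermitian Λ-modules, Q the field of fractions of Λ, and let φ₁ : H₁ ⊗_Λ Q → H₂ ⊗_Λ Q and φ₂ : H₂ ⊗_Λ Q → H₃ ⊗_Λ Q be unitary Q-isomorphisms. Then the restricted graph of the composite satisfies Γ⁰_{φ₂ ∘ φ₁} = (Γ⁰_{φ₂} Γ⁰_{φ₁})‾, the closure in H₁ ⊕ H₃ of the composition of the restricted graphs. -/
open scoped TensorProduct

/-- Every element of `Q ⊗ H` has a nonzero multiple in the image of `H`. -/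
lemma exists_smul_tmul {Λ : Type*} [CommRing Λ] [IsDomain Λ]
    {H : Type*} [AddCommGroup H] [Module Λ H]
    (x : FractionRing Λ ⊗[Λ] H) :
    ∃ c : Λ, c ≠ 0 ∧ ∃ h : H, c • x = (1 : FractionRing Λ) ⊗ₜ[Λ] h := by
  induction x using TensorProduct.induction_on with
  | zero => exact ⟨1, one_ne_zero, 0, by simp⟩
  | tmul q h =>
    obtain ⟨⟨a, c⟩, hq⟩ := IsLocalization.surj (nonZeroDivisors Λ) q
    refine ⟨c, nonZeroDivisors.coe_ne_zero c, a • h, ?_⟩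
    rw [TensorProduct.smul_tmul', ← TensorProduct.smul_tmul]
    congr 1
    rw [Algebra.smul_def, Algebra.smul_def, mul_one, ← hq, mul_comm]
  | add x y hx hy =>
    obtain ⟨c, hc, h, hch⟩ := hx
    obtain ⟨d, hd, g, hdg⟩ := hy
    refine ⟨c * d, mul_ne_zero hc hd, d • h + c • g, ?_⟩
    have hx' : (c * d) • x = d • ((1 : FractionRing Λ) ⊗ₜ[Λ] h) := by
      rw [mul_comm, mul_smul, hch]
    have hy' : (c * d) • y = c • ((1 : FractionRing Λ) ⊗ₜ[Λ] g) := by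
      rw [mul_smul, hdg]
    rw [smul_add, hx', hy', TensorProduct.tmul_add, TensorProduct.tmul_smul,
      TensorProduct.tmul_smul]

/-- Theorem 10 (functoriality): the restricted graph of a composition of
unitary `Q`-isomorphisms is the closure of the composition of the restricted
graphs. -/
theorem resGraph_comp
    {Λ : Type*} [CommRing Λ] [IsDomain Λ] [StarRing Λ]
    {H₁ H₂ H₃ : Type*}
    [AddCommGroup H₁] [Module Λ H₁] [Module.Finite Λ H₁]
    [AddCommGroup H₂] [Module Λ H₂] [Module.Finite Λ H₂]
    [AddCommGroup H₃] [Module Λ H₃] [Module.Finite Λ H₃]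
    (ω₁ : SesqForm Λ H₁) (ω₂ : SesqForm Λ H₂) (ω₃ : SesqForm Λ H₃)
    (h₁s : ω₁.IsSkew) (h₁n : ω₁.Nondeg)
    (h₂s : ω₂.IsSkew) (h₂n : ω₂.Nondeg)
    (h₃s : ω₃.IsSkew) (h₃n : ω₃.Nondeg)
    (starQ : FractionRing Λ →+* FractionRing Λ)
    (hstarQinv : ∀ q : FractionRing Λ, starQ (starQ q) = q)
    (hstarQalg : ∀ a : Λ,
      starQ (algebraMap Λ (FractionRing Λ) a) = algebraMap Λ (FractionRing Λ) (star a))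
    (Ω₁ : (FractionRing Λ ⊗[Λ] H₁) → (FractionRing Λ ⊗[Λ] H₁) → FractionRing Λ)
    (hΩ₁addl : ∀ x x' y, Ω₁ (x + x') y = Ω₁ x y + Ω₁ x' y)
    (hΩ₁smull : ∀ (q : FractionRing Λ) x y, Ω₁ (q • x) y = q * Ω₁ x y)
    (hΩ₁addr : ∀ x y y', Ω₁ x (y + y') = Ω₁ x y + Ω₁ x y')
    (hΩ₁smulr : ∀ (q : FractionRing Λ) x y, Ω₁ x (q • y) = starQ q * Ω₁ x y)
    (hΩ₁ext : ∀ x y : H₁,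
      Ω₁ ((1 : FractionRing Λ) ⊗ₜ[Λ] x) ((1 : FractionRing Λ) ⊗ₜ[Λ] y) = algebraMap Λ (FractionRing Λ) (ω₁ x y))
    (Ω₂ : (FractionRing Λ ⊗[Λ] H₂) → (FractionRing Λ ⊗[Λ] H₂) → FractionRing Λ)
    (hΩ₂addl : ∀ x x' y, Ω₂ (x + x') y = Ω₂ x y + Ω₂ x' y)
    (hΩ₂smull : ∀ (q : FractionRing Λ) x y, Ω₂ (q • x) y = q * Ω₂ x y)
    (hΩ₂addr : ∀ x y y', Ω₂ x (y + y') = Ω₂ x y + Ω₂ x y')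
    (hΩ₂smulr : ∀ (q : FractionRing Λ) x y, Ω₂ x (q • y) = starQ q * Ω₂ x y)
    (hΩ₂ext : ∀ x y : H₂,
      Ω₂ ((1 : FractionRing Λ) ⊗ₜ[Λ] x) ((1 : FractionRing Λ) ⊗ₜ[Λ] y) = algebraMap Λ (FractionRing Λ) (ω₂ x y))
    (Ω₃ : (FractionRing Λ ⊗[Λ] H₃) → (FractionRing Λ ⊗[Λ] H₃) → FractionRing Λ)
    (hΩ₃addl : ∀ x x' y, Ω₃ (x + x') y = Ω₃ x y + Ω₃ x' y)
    (hΩ₃smull : ∀ (q : FractionRing Λ) x y, Ω₃ (q • x) y = q * Ω₃ x y)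
    (hΩ₃addr : ∀ x y y', Ω₃ x (y + y') = Ω₃ x y + Ω₃ x y')
    (hΩ₃smulr : ∀ (q : FractionRing Λ) x y, Ω₃ x (q • y) = starQ q * Ω₃ x y)
    (hΩ₃ext : ∀ x y : H₃,
      Ω₃ ((1 : FractionRing Λ) ⊗ₜ[Λ] x) ((1 : FractionRing Λ) ⊗ₜ[Λ] y) = algebraMap Λ (FractionRing Λ) (ω₃ x y))
    (φ₁ : (FractionRing Λ ⊗[Λ] H₁) ≃ₗ[FractionRing Λ] (FractionRing Λ ⊗[Λ] H₂))
    (hφ₁ : ∀ x y, Ω₂ (φ₁ x) (φ₁ y) = Ω₁ x y)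
    (φ₂ : (FractionRing Λ ⊗[Λ] H₂) ≃ₗ[FractionRing Λ] (FractionRing Λ ⊗[Λ] H₃))
    (hφ₂ : ∀ x y, Ω₃ (φ₂ x) (φ₂ y) = Ω₂ x y) :
    resGraph (φ₁.trans φ₂) = (relComp (resGraph φ₁) (resGraph φ₂)).clos := by
  ext ⟨x₁, x₃⟩
  constructor
  · intro hx
    have hx : φ₂ (φ₁ ((1 : FractionRing Λ) ⊗ₜ[Λ] x₁)) = (1 : FractionRing Λ) ⊗ₜ[Λ] x₃ := hx
    obtain ⟨c, hc, h₂, hch⟩ := exists_smul_tmul (φ₁ ((1 : FractionRing Λ) ⊗ₜ[Λ] x₁))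
    refine ⟨c, hc, h₂, ?_, ?_⟩
    · show φ₁ ((1 : FractionRing Λ) ⊗ₜ[Λ] (c • x₁)) = (1 : FractionRing Λ) ⊗ₜ[Λ] h₂
      rw [TensorProduct.tmul_smul, ← algebraMap_smul (FractionRing Λ) c, map_smul,
        algebraMap_smul, hch]
    · show φ₂ ((1 : FractionRing Λ) ⊗ₜ[Λ] h₂) = (1 : FractionRing Λ) ⊗ₜ[Λ] (c • x₃)
      rw [← hch, ← algebraMap_smul (FractionRing Λ) c, map_smul, algebraMap_smul, hx,
        TensorProduct.tmul_smul]
  · rintro ⟨c, hc, h₂, h12, h23⟩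
    have h12 : φ₁ ((1 : FractionRing Λ) ⊗ₜ[Λ] (c • x₁)) = (1 : FractionRing Λ) ⊗ₜ[Λ] h₂ := h12
    have h23 : φ₂ ((1 : FractionRing Λ) ⊗ₜ[Λ] h₂) = (1 : FractionRing Λ) ⊗ₜ[Λ] (c • x₃) := h23
    show φ₂ (φ₁ ((1 : FractionRing Λ) ⊗ₜ[Λ] x₁)) = (1 : FractionRing Λ) ⊗ₜ[Λ] x₃
    have : c • (φ₂ (φ₁ ((1 : FractionRing Λ) ⊗ₜ[Λ] x₁)) - (1 : FractionRing Λ) ⊗ₜ[Λ] x₃) = 0 := by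
      have e1 : c • φ₂ (φ₁ ((1 : FractionRing Λ) ⊗ₜ[Λ] x₁))
          = (1 : FractionRing Λ) ⊗ₜ[Λ] (c • x₃) := by
        rw [← algebraMap_smul (FractionRing Λ) c, ← map_smul, ← map_smul,
          algebraMap_smul, ← TensorProduct.tmul_smul, h12, h23]
      rw [smul_sub, e1, TensorProduct.tmul_smul, ← TensorProduct.tmul_smul, sub_self]
    have hc' : (algebraMap Λ (FractionRing Λ)) c ≠ 0 := by
      simpa using fun h => hc ((IsFractionRing.injective Λ (FractionRing Λ))
        (by rw [h, map_zero]))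
    rw [← algebraMap_smul (FractionRing Λ) c, smul_eq_zero] at this
    rcases this with h | h
    · exact absurd h hc'
    · exact sub_eq_zero.mp h
end
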